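/- For every n ≥ 1, the formula α^n := φ0 ∧ □^{≤n}(φ1 ∧ φ2 ∧ ◇⊤) (with φ0, φ1, φ2 as in the context) is satisfiable in an increasing domain model. Moreover, for every increasing domain model M and world r with M,r ⊨ α^n, for every 0 ≤ j < n: there exists a world at distance j from r, and for every world w at distance j from r there exists an injection f_w : Σ^n_j → δ(w) such that whenever f_w(s) = d, for every 0 ≤ k < n: the k-th bit of s equals 1 if and only if d ∈ ρ(u, P_k) for every R-successor u of w. -/

import Mathlib

set_option maxHeartbeats 1000000

/-! ## Syntax of first-order modal logic (FOML)

Predicate symbols and variables are represented by natural numbers; an atom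
`atom p args` applies the predicate symbol `p` to the list of variables `args`
(the arity of `p` in this occurrence is the length of `args`). -/
inductive Formula : Type where
  | atom (p : ℕ) (args : List ℕ)
  | neg  (φ : Formula)
  | and  (φ ψ : Formula)
  | or   (φ ψ : Formula)
  | box  (φ : Formula)
  | dia  (φ : Formula)
  | ex   (x : ℕ) (φ : Formula)
  | all  (x : ℕ) (φ : Formula)
deriving DecidableEq

namespace Formula

def imp (φ ψ : Formula) : Formula := .or φ.neg ψ
def biimp (φ ψ : Formula) : Formula := .and (imp φ ψ) (imp ψ φ)
/-- a fixed tautology `⊤` -/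
def top : Formula := .or (.atom 0 []) (.neg (.atom 0 []))
/-- a fixed contradiction `⊥` -/
def bot : Formula := .and (.atom 0 []) (.neg (.atom 0 []))

end Formula

def bigAnd (l : List Formula) : Formula := l.foldr Formula.and Formula.top
def bigOr  (l : List Formula) : Formula := l.foldr Formula.or Formula.bot

/-! ## Semantics: Kripke structures with world-relative domains -/

structure Model where
  W : Type
  D : Type
  R : W → W → Prop
  dom : W → Set D
  ρ : W → ℕ → Set (List D)

/-- `M` is an increasing domain model: nonempty countable set of worlds, nonempty
countable domain, nonempty local domains that increase along the accessibility
relation, and interpretations of predicates at a world take values in the local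
domain of that world. -/
def Model.Increasing (M : Model) : Prop :=
  Nonempty M.W ∧ Nonempty M.D ∧ Countable M.W ∧ Countable M.D ∧
    (∀ w, (M.dom w).Nonempty) ∧
    (∀ w v, M.R w v → M.dom w ⊆ M.dom v) ∧
    (∀ w p l, l ∈ M.ρ w p → ∀ d ∈ l, d ∈ M.dom w)

def Model.sat (M : Model) : M.W → (ℕ → M.D) → Formula → Prop
  | w, σ, .atom p args => args.map σ ∈ M.ρ w p
  | w, σ, .neg φ => ¬ M.sat w σ φ
  | w, σ, .and φ ψ => M.sat w σ φ ∧ M.sat w σ ψ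
  | w, σ, .or φ ψ => M.sat w σ φ ∨ M.sat w σ ψ
  | w, σ, .box φ => ∀ v, M.R w v → M.sat v σ φ
  | w, σ, .dia φ => ∃ v, M.R w v ∧ M.sat v σ φ
  | w, σ, .ex x φ => ∃ d ∈ M.dom w, M.sat w (Function.update σ x d) φ
  | w, σ, .all x φ => ∀ d ∈ M.dom w, M.sat w (Function.update σ x d) φ

/-- the assignment `σ` is relevant at the world `w` -/
def Model.relevant (M : Model) (w : M.W) (σ : ℕ → M.D) : Prop := ∀ x, σ x ∈ M.dom w

/-- satisfiability over increasing domain models -/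
def Satisfiable (φ : Formula) : Prop :=
  ∃ (M : Model), M.Increasing ∧ ∃ (w : M.W) (σ : ℕ → M.D), M.relevant w σ ∧ M.sat w σ φ
/-! ## The ABEB formulas forcing exponentially many elements

Unary predicates `P_0, …, P_{n-1}` are the predicate symbols `0, …, n-1`;
variables: `x := 0` and `y_i := 1 + i`. -/

/-- the unary atom `P_i(x)` -/
def atomPU (i x : ℕ) : Formula := .atom i [x]

/-- `φ0 := ∃x □ ⋀_{0≤i<n} ¬P_i(x)` -/
def phiZero (n : ℕ) : Formula :=
  .ex 0 (.box (bigAnd ((List.range n).map fun i => .neg (atomPU i 0))))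

/-- `φ1 := ∀x □ ⋀_{0≤i<n} ((P_i(x) → □P_i(x)) ∧ (¬P_i(x) → □¬P_i(x)))` -/
def phiOne (n : ℕ) : Formula :=
  .all 0 (.box (bigAnd ((List.range n).map fun i =>
    .and ((atomPU i 0).imp (.box (atomPU i 0)))
      ((Formula.neg (atomPU i 0)).imp (.box (.neg (atomPU i 0)))))))

/-- `φ2 := ∀x □ ⋀_{0≤i<n} ( ¬P_i(x) → ∃y_i □( P_i(y_i) ∧ ⋀_{j≠i}(P_j(x) ↔ P_j(y_i)) ) )` -/
def phiTwo (n : ℕ) : Formula :=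
  .all 0 (.box (bigAnd ((List.range n).map fun i =>
    (Formula.neg (atomPU i 0)).imp
      (.ex (1 + i) (.box (.and (atomPU i (1 + i))
        (bigAnd (((List.range n).filter (fun j => decide (j ≠ i))).map fun j =>
          (atomPU j 0).biimp (atomPU j (1 + i))))))))))

/-- `□^{≤0}ψ := ⊤` and `□^{≤n}ψ := ψ ∧ □(□^{≤n-1}ψ)` -/
def boxLe : ℕ → Formula → Formula
  | 0, _ => .top
  | n + 1, ψ => .and ψ (.box (boxLe n ψ))

/-- `α^n := φ0 ∧ □^{≤n}(φ1 ∧ φ2 ∧ ◇⊤)` -/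
def alphaN (n : ℕ) : Formula :=
  .and (phiZero n) (boxLe n (.and (phiOne n) (.and (phiTwo n) (.dia .top))))

/-- `atDist M r j w` : there is a path of length `j` from `r` to `w` -/
def atDist (M : Model) (r : M.W) : ℕ → M.W → Prop
  | 0, w => w = r
  | j + 1, w => ∃ v, atDist M r j v ∧ M.R v w

/-- the number of `1`-bits of a binary string of length `n` -/
def onesCount {n : ℕ} (s : Fin n → Bool) : ℕ :=
  (Finset.univ.filter fun k => s k = true).card

/-! Say that `d` encodes the bit string `s` at `w` if at every successor of `w`, `d` satisfies
exactly the `P_k` with `s k = 1`. By `φ0` some element encodes the all-zero string at the root.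
By `φ1` an element's `P_k` never change from one step on, and by `φ2` any `0`-bit of a string
encoded at `v` can be switched to `1` by a fresh element at the next world. Induction on `j`,
carrying old elements along the increasing domains, shows that at distance `j < n` every string
with at most `j` ones is encoded by an element of the local domain; as `◇⊤` provides a successor,
distinct strings are encoded by distinct elements. -/

lemma onesCount_eq_zero_iff {n : ℕ} {s : Fin n → Bool} :
    onesCount s = 0 ↔ s = fun _ => false := by
  simp [onesCount, Finset.filter_eq_empty_iff, funext_iff]

lemma exists_eq_true_of_onesCount_pos {n : ℕ} {s : Fin n → Bool} (h : 0 < onesCount s) :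
    ∃ i, s i = true := by
  obtain ⟨i, hi⟩ := Finset.card_pos.1 h
  exact ⟨i, (Finset.mem_filter.1 hi).2⟩

lemma onesCount_update_false {n : ℕ} {s : Fin n → Bool} {i : Fin n} (hi : s i = true) :
    onesCount (Function.update s i false) + 1 = onesCount s := by
  have : (Finset.univ.filter fun k => Function.update s i false k = true) =
      (Finset.univ.filter fun k => s k = true).erase i := by
    ext k
    rcases eq_or_ne k i with rfl | hki <;> simp [*]
  rw [onesCount, this, Finset.card_erase_add_one (by simp [hi]), onesCount]

namespace Model

variable {M : Model} {r w : M.W} {σ : ℕ → M.D}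

@[simp] lemma sat_top : M.sat w σ .top := by
  simp only [Formula.top, sat]
  exact em _

@[simp] lemma sat_imp {φ ψ : Formula} :
    M.sat w σ (φ.imp ψ) ↔ (M.sat w σ φ → M.sat w σ ψ) := by
  simp only [Formula.imp, sat, imp_iff_not_or]

@[simp] lemma sat_biimp {φ ψ : Formula} :
    M.sat w σ (φ.biimp ψ) ↔ (M.sat w σ φ ↔ M.sat w σ ψ) := by
  simp only [Formula.biimp, sat, sat_imp, iff_iff_implies_and_implies]

lemma sat_bigAnd {l : List Formula} :
    M.sat w σ (bigAnd l) ↔ ∀ φ ∈ l, M.sat w σ φ := by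
  induction l with
  | nil => simp [bigAnd]
  | cons φ l ih => simp [bigAnd, sat, ← ih]

@[simp] lemma sat_bigAnd_map {α : Type*} {l : List α} {f : α → Formula} :
    M.sat w σ (bigAnd (l.map f)) ↔ ∀ a ∈ l, M.sat w σ (f a) := by
  simp only [sat_bigAnd, List.forall_mem_map]

@[simp] lemma sat_atomPU {i x : ℕ} : M.sat w σ (atomPU i x) ↔ [σ x] ∈ M.ρ w i := by
  simp [atomPU, sat]

lemma sat_phiZero_iff {n : ℕ} :
    M.sat w σ (phiZero n) ↔
      ∃ d ∈ M.dom w, ∀ v, M.R w v → ∀ i < n, [d] ∉ M.ρ v i := by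
  simp [phiZero, sat]

lemma sat_phiOne_iff {n : ℕ} :
    M.sat w σ (phiOne n) ↔ ∀ d ∈ M.dom w, ∀ v, M.R w v → ∀ i < n,
      ([d] ∈ M.ρ v i → ∀ u, M.R v u → [d] ∈ M.ρ u i) ∧
      ([d] ∉ M.ρ v i → ∀ u, M.R v u → [d] ∉ M.ρ u i) := by
  simp [phiOne, sat]

lemma sat_phiTwo_iff {n : ℕ} :
    M.sat w σ (phiTwo n) ↔ ∀ d ∈ M.dom w, ∀ v, M.R w v → ∀ i < n, [d] ∉ M.ρ v i →
      ∃ e ∈ M.dom v, ∀ u, M.R v u → [e] ∈ M.ρ u i ∧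
        ∀ j < n, j ≠ i → ([d] ∈ M.ρ u j ↔ [e] ∈ M.ρ u j) := by
  have hxy : ∀ i, (0 : ℕ) ≠ 1 + i := by omega
  simp [phiTwo, sat, hxy]

lemma sat_boxLe_of_forall {ψ : Formula} (h : ∀ v, M.sat v σ ψ) :
    ∀ m v, M.sat v σ (boxLe m ψ)
  | 0, _ => sat_top
  | m + 1, v => ⟨h v, fun u _ => sat_boxLe_of_forall h m u⟩

lemma sat_boxLe_of_atDist {ψ : Formula} {m : ℕ} (hr : M.sat r σ (boxLe m ψ)) :
    ∀ {j v}, j ≤ m → atDist M r j v → M.sat v σ (boxLe (m - j) ψ)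
  | 0, v, _, hv => by rwa [show v = r from hv]
  | j + 1, _, hj, ⟨v, hv, hvu⟩ => by
    have hv' : M.sat v σ (boxLe (m - j - 1 + 1) ψ) := by
      rw [show m - j - 1 + 1 = m - j by omega]
      exact sat_boxLe_of_atDist hr (by omega) hv
    exact hv'.2 _ hvu

lemma sat_alphaN_of_atDist {n j : ℕ} (hr : M.sat r σ (alphaN n)) (hj : j < n)
    (hw : atDist M r j w) :
    M.sat w σ (phiOne n) ∧ M.sat w σ (phiTwo n) ∧ ∃ u, M.R w u := by
  have hw' := sat_boxLe_of_atDist hr.2 hj.le hw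
  rw [show n - j = n - j - 1 + 1 by omega] at hw'
  obtain ⟨h1, h2, u, hu, -⟩ := hw'.1
  exact ⟨h1, h2, u, hu⟩

lemma exists_atDist {n : ℕ} (hr : M.sat r σ (alphaN n)) :
    ∀ {j}, j ≤ n → ∃ v, atDist M r j v
  | 0, _ => ⟨r, rfl⟩
  | j + 1, hj => by
    obtain ⟨v, hv⟩ := exists_atDist hr (by omega : j ≤ n)
    obtain ⟨-, -, u, hu⟩ := sat_alphaN_of_atDist hr hj hv
    exact ⟨u, v, hv, hu⟩

def Encodes (M : Model) {n : ℕ} (w : M.W) (d : M.D) (s : Fin n → Bool) : Prop :=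
  ∀ u, M.R w u → ∀ k : Fin n, [d] ∈ M.ρ u k ↔ s k = true

variable {n : ℕ} {v : M.W} {d : M.D} {s : Fin n → Bool}

lemma exists_encodes_false_of_sat_phiZero (h : M.sat w σ (phiZero n)) :
    ∃ d ∈ M.dom w, M.Encodes w d (fun _ : Fin n => false) := by
  obtain ⟨d, hd, hd0⟩ := sat_phiZero_iff.1 h
  exact ⟨d, hd, fun u hu k => by simpa using hd0 u hu k k.isLt⟩

lemma Encodes.of_sat_phiOne (h1 : M.sat v σ (phiOne n)) (hd : d ∈ M.dom v) (hvw : M.R v w)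
    (hs : M.Encodes v d s) : M.Encodes w d s := by
  intro u hwu k
  obtain ⟨hpos, hneg⟩ := sat_phiOne_iff.1 h1 d hd w hvw k k.isLt
  rw [← hs w hvw k]
  exact ⟨fun hu => by_contra fun hw => hneg hw u hwu hu, fun hw => hpos hw u hwu⟩

lemma Encodes.exists_update_of_sat_phiTwo (h1 : M.sat v σ (phiOne n))
    (h2 : M.sat v σ (phiTwo n)) (hd : d ∈ M.dom v) (hvw : M.R v w) (hs : M.Encodes v d s)
    {i : Fin n} (hi : s i = false) :
    ∃ e ∈ M.dom w, M.Encodes w e (Function.update s i true) := by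
  have hdw := hs.of_sat_phiOne h1 hd hvw
  obtain ⟨e, he, hde⟩ := sat_phiTwo_iff.1 h2 d hd w hvw i i.isLt (by simp [hs w hvw i, hi])
  refine ⟨e, he, fun u hwu k => ?_⟩
  obtain ⟨hei, hdej⟩ := hde u hwu
  rcases eq_or_ne k i with rfl | hki
  · simpa using hei
  · rw [Function.update_of_ne hki, ← hdw u hwu k]
    exact (hdej k k.isLt (Fin.val_ne_of_ne hki)).symm

lemma Encodes.unique (hs : M.Encodes w d s) {t : Fin n → Bool} (ht : M.Encodes w d t) {u : M.W}
    (hwu : M.R w u) : s = t :=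
  funext fun k => Bool.eq_iff_iff.2 ((hs u hwu k).symm.trans (ht u hwu k))

lemma Encodes.eq_true_iff (hs : M.Encodes w d s) {u : M.W} (hwu : M.R w u) (k : Fin n) :
    s k = true ↔ ∀ u, M.R w u → [d] ∈ M.ρ u k :=
  ⟨fun h u' hwu' => (hs u' hwu' k).2 h, fun h => (hs u hwu k).1 (h u hwu)⟩

lemma exists_encodes_of_atDist (hinc : ∀ v w, M.R v w → M.dom v ⊆ M.dom w)
    (hr : M.sat r σ (alphaN n)) {j : ℕ} {w : M.W} (hj : j ≤ n) (hw : atDist M r j w)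
    {s : Fin n → Bool} (hs : onesCount s ≤ j) : ∃ d ∈ M.dom w, M.Encodes w d s := by
  induction j generalizing w s with
  | zero =>
    obtain rfl : w = r := hw
    obtain rfl := onesCount_eq_zero_iff.1 (Nat.le_zero.1 hs)
    exact exists_encodes_false_of_sat_phiZero hr.1
  | succ j ih =>
    obtain ⟨v, hv, hvw⟩ := hw
    obtain ⟨h1, h2, -⟩ := sat_alphaN_of_atDist hr hj hv
    by_cases hsj : onesCount s ≤ j
    · obtain ⟨d, hd, hds⟩ := ih (by omega) hv hsj
      exact ⟨d, hinc v w hvw hd, hds.of_sat_phiOne h1 hd hvw⟩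
    · obtain ⟨i, hi⟩ := exists_eq_true_of_onesCount_pos (s := s) (by omega)
      have hcount := onesCount_update_false hi
      obtain ⟨d, hd, hds⟩ := ih (by omega) hv (s := Function.update s i false) (by omega)
      have := hds.exists_update_of_sat_phiTwo h1 h2 hd hvw (Function.update_self ..)
      rwa [Function.update_idem, ← hi, Function.update_eq_self] at this

end Model

abbrev cubeModel (n : ℕ) : Model where
  W := Unit
  D := Fin n → Bool
  R _ _ := True
  dom _ := Set.univ
  ρ _ p := (fun s => [s]) '' {s | ∃ h : p < n, s ⟨p, h⟩ = true}

namespace cubeModel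

variable {n : ℕ}

lemma increasing : (cubeModel n).Increasing :=
  ⟨⟨()⟩, ⟨fun _ => false⟩, inferInstanceAs (Countable Unit),
    inferInstanceAs (Countable (Fin n → Bool)), fun _ => ⟨fun _ => false, trivial⟩,
    fun _ _ _ => subset_rfl, fun _ _ _ _ _ _ => trivial⟩

@[simp] lemma singleton_mem_ρ {w : Unit} {p : ℕ} {d : Fin n → Bool} :
    [d] ∈ (cubeModel n).ρ w p ↔ ∃ h : p < n, d ⟨p, h⟩ = true := by
  simp

lemma sat_phiZero {σ : ℕ → Fin n → Bool} : (cubeModel n).sat () σ (phiZero n) :=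
  Model.sat_phiZero_iff.2 ⟨fun _ => false, trivial, by simp⟩

lemma sat_phiOne {w : Unit} {σ : ℕ → Fin n → Bool} : (cubeModel n).sat w σ (phiOne n) :=
  Model.sat_phiOne_iff.2 fun _ _ _ _ _ _ => ⟨fun h _ _ => h, fun h _ _ => h⟩

lemma sat_phiTwo {w : Unit} {σ : ℕ → Fin n → Bool} : (cubeModel n).sat w σ (phiTwo n) := by
  refine Model.sat_phiTwo_iff.2 fun d _ _ _ i hi _ =>
    ⟨Function.update d ⟨i, hi⟩ true, trivial, fun _ _ => ⟨by simp [hi], fun j hj hji => ?_⟩⟩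
  have : (⟨j, hj⟩ : Fin n) ≠ ⟨i, hi⟩ := by simpa [Fin.ext_iff] using hji
  simp [hj, Function.update_of_ne this]

end cubeModel

theorem satisfiable_alphaN (n : ℕ) : Satisfiable (alphaN n) := by
  refine ⟨cubeModel n, cubeModel.increasing, (), fun _ _ => false, fun _ => trivial,
    cubeModel.sat_phiZero, Model.sat_boxLe_of_forall (fun _ => ?_) _ _⟩
  exact ⟨cubeModel.sat_phiOne, cubeModel.sat_phiTwo, (), trivial, Model.sat_top⟩

theorem alphaN_forces_exponential_domain_general (n : ℕ) :
    (∃ M : Model, M.Increasing ∧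
      ∃ (w : M.W) (σ : ℕ → M.D), M.relevant w σ ∧ M.sat w σ (alphaN n)) ∧
    (∀ M : Model, M.Increasing →
      ∀ (r : M.W) (σ : ℕ → M.D), M.relevant r σ → M.sat r σ (alphaN n) →
        ∀ j, j < n →
          (∃ w, atDist M r j w) ∧
          (∀ w, atDist M r j w →
            ∃ f : (Fin n → Bool) → M.D,
              Set.InjOn f {s | onesCount s ≤ j} ∧
              ∀ s : Fin n → Bool, onesCount s ≤ j →
                f s ∈ M.dom w ∧
                ∀ k : Fin n,
                  (s k = true ↔ ∀ u, M.R w u → [f s] ∈ M.ρ u (k : ℕ)))) := by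
  refine ⟨satisfiable_alphaN n, fun M hM r σ _ hr j hj =>
    ⟨Model.exists_atDist hr hj.le, fun w hw => ?_⟩⟩
  obtain ⟨-, hD, -, -, -, hinc, -⟩ := hM
  obtain ⟨-, -, u, hwu⟩ := Model.sat_alphaN_of_atDist hr hj hw
  choose! f hfdom hf using fun s (hs : onesCount s ≤ j) =>
    Model.exists_encodes_of_atDist hinc hr hj.le hw hs
  exact ⟨f, fun s hs t ht hst => (hf s hs).unique (hst ▸ hf t ht) hwu,
    fun s hs => ⟨hfdom s hs, (hf s hs).eq_true_iff hwu⟩⟩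

/-- For every `n ≥ 1` the formula `α^n` is satisfiable in an
increasing domain model.  Moreover, whenever `M,r ⊨ α^n` in an increasing
domain model, then for every `0 ≤ j < n`: there is a world at distance `j` from
`r`, and for every world `w` at distance `j` from `r` there is an injection
`f_w` from the binary strings of length `n` with at most `j` ones into `δ(w)`
such that whenever `f_w(s) = d`, for every `k < n`: the `k`-th bit of `s` is
`1` iff `d` satisfies `P_k` at every successor of `w`. -/
theorem alphaN_forces_exponential_domain (n : ℕ) (hn : 1 ≤ n) :
    (∃ M : Model, M.Increasing ∧
      ∃ (w : M.W) (σ : ℕ → M.D), M.relevant w σ ∧ M.sat w σ (alphaN n)) ∧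
    (∀ M : Model, M.Increasing →
      ∀ (r : M.W) (σ : ℕ → M.D), M.relevant r σ → M.sat r σ (alphaN n) →
        ∀ j, j < n →
          (∃ w, atDist M r j w) ∧
          (∀ w, atDist M r j w →
            ∃ f : (Fin n → Bool) → M.D,
              Set.InjOn f {s | onesCount s ≤ j} ∧
              ∀ s : Fin n → Bool, onesCount s ≤ j →
                f s ∈ M.dom w ∧
                ∀ k : Fin n,
                  (s k = true ↔ ∀ u, M.R w u → [f s] ∈ M.ρ u (k : ℕ)))) :=
  alphaN_forces_exponential_domain_general n
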